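/- The matching DA(P) is Pareto-efficient if and only if the envy digraph G^DA(P) contains no directed cycle. -/

import Mathlib

/-!
A school choice problem: finitely many students `I` and schools `S`
(with a distinguished null school of quota `|I|`).  Each student `i` has a
strict preference over schools represented by its rank function
`rk i : S → ℕ` (a bijection onto `{1, …, |S|}`, where rank 1 is the most
preferred school); each school `s` has a quota `quota s ≥ 1` and a strict
priority over students represented by `prio s : I → ℕ`
(`i ▷_s j` iff `prio s i < prio s j`).
-/
structure SchoolChoice (I S : Type) [Fintype I] [Fintype S]
    [DecidableEq I] [DecidableEq S] where
  nullSchool : S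
  quota : S → ℕ
  rk : I → S → ℕ
  prio : S → I → ℕ
  quota_pos : ∀ s : S, 1 ≤ quota s
  quota_null : quota nullSchool = Fintype.card I
  rk_inj : ∀ i : I, Function.Injective (rk i)
  rk_mem : ∀ (i : I) (s : S), rk i s ∈ Finset.Icc 1 (Fintype.card S)
  prio_inj : ∀ s : S, Function.Injective (prio s)

namespace SchoolChoice

open scoped Classical

variable {I S : Type} [Fintype I] [Fintype S] [DecidableEq I] [DecidableEq S]

/-- `μ` is a matching: no school is assigned more students than its quota. -/
def IsMatching (P : SchoolChoice I S) (μ : I → S) : Prop :=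
  ∀ s : S, (Finset.univ.filter fun i => μ i = s).card ≤ P.quota s

/-- Given the sets `R i` of schools that have rejected student `i` so far,
student `i` proposes to her most preferred school that has not rejected her. -/
noncomputable def propose (P : SchoolChoice I S) (R : I → Finset S) (i : I) : S :=
  if h : (Finset.univ \ R i).Nonempty then
    (Finset.exists_min_image (Finset.univ \ R i) (P.rk i) h).choose
  else P.nullSchool

/-- At the DA round with rejection state `R`, school `s` rejects student `i`:
`i` applies to `s` and at least `quota s` applicants to `s` have higher priority. -/
def rejectsAt (P : SchoolChoice I S) (R : I → Finset S) (s : S) (i : I) : Prop :=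
  P.propose R i = s ∧
    P.quota s ≤ (Finset.univ.filter fun j =>
      P.propose R j = s ∧ P.prio s j < P.prio s i).card

/-- One round of student-proposing Deferred Acceptance: record new rejections. -/
noncomputable def stepR (P : SchoolChoice I S) (R : I → Finset S) : I → Finset S :=
  fun i => R i ∪ (Finset.univ.filter fun s => P.rejectsAt R s i)

/-- Rejection state after `n` rounds of Deferred Acceptance. -/
noncomputable def daR (P : SchoolChoice I S) : ℕ → I → Finset S
  | 0 => fun _ => (∅ : Finset S)
  | n + 1 => P.stepR (P.daR n)

/-- The outcome of the student-proposing Deferred Acceptance algorithm: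
iterate rounds until no rejection occurs (which happens within
`|I|·|S| + 1` rounds); each student is matched to the school holding her. -/
noncomputable def DA (P : SchoolChoice I S) : I → S :=
  P.propose (P.daR (Fintype.card I * Fintype.card S + 1))

/-- A matching `ν` is stable-dominating if every student weakly prefers
`ν` to the DA outcome. -/
def StableDominating (P : SchoolChoice I S) (ν : I → S) : Prop :=
  P.IsMatching ν ∧ ∀ i : I, P.rk i (ν i) ≤ P.rk i (P.DA i)

/-- Student `i` is unimprovable: every stable-dominating matching assigns `i`
to her DA school. -/
def Unimprovable (P : SchoolChoice I S) (i : I) : Prop :=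
  ∀ ν : I → S, P.StableDominating ν → ν i = P.DA i

/-- Edge of the envy digraph `G^DA(P)`: `i` prefers `j`'s DA school to her own. -/
def Envy (P : SchoolChoice I S) (i j : I) : Prop :=
  P.rk i (P.DA j) < P.rk i (P.DA i)

/-- Student `i` lies on a directed cycle of the envy digraph `G^DA(P)`. -/
def OnCycle (P : SchoolChoice I S) (i : I) : Prop :=
  ∃ (m : ℕ) (c : ℕ → I), 0 < m ∧ c 0 = i ∧ c m = i ∧
    ∀ k < m, P.Envy (c k) (c (k + 1))

/-- Student `i` desires school `s` in matching `μ`. -/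
def Desires (P : SchoolChoice I S) (μ : I → S) (i : I) (s : S) : Prop :=
  P.rk i s < P.rk i (μ i)

/-- `μ` is non-wasteful: every desired school is filled to quota. -/
def NonWasteful (P : SchoolChoice I S) (μ : I → S) : Prop :=
  ∀ s : S, (∃ i : I, P.Desires μ i s) →
    (Finset.univ.filter fun i => μ i = s).card = P.quota s

/-- `μ` is stable: a non-wasteful matching with no priority violations. -/
def Stable (P : SchoolChoice I S) (μ : I → S) : Prop :=
  P.IsMatching μ ∧ P.NonWasteful μ ∧
    ¬ ∃ (i j : I) (s : S), P.Desires μ i s ∧ μ j = s ∧ P.prio s i < P.prio s j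

/-- `μ` Pareto-dominates `ν`. -/
def ParetoDominates (P : SchoolChoice I S) (μ ν : I → S) : Prop :=
  (∀ i : I, P.rk i (μ i) ≤ P.rk i (ν i)) ∧ ∃ i : I, P.rk i (μ i) < P.rk i (ν i)

/-- `μ` is a Pareto-efficient matching. -/
def ParetoEfficient (P : SchoolChoice I S) (μ : I → S) : Prop :=
  P.IsMatching μ ∧ ∀ ν : I → S, P.IsMatching ν → ¬ P.ParetoDominates ν μ

end SchoolChoice

/-!
If the envy digraph has a cycle, a shortest one is simple, and letting every student on it take
the DA school of her successor is a Pareto improvement (the assignment is permuted, so quotas stay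
respected). Conversely, let a matching `ν` Pareto-dominate `DA(P)`. Because `DA(P)` is
non-wasteful, the school `ν i` of a strictly improved student `i` is filled to quota under
`DA(P)`, so one of its DA occupants `j` leaves it under `ν`; then `j` is strictly improved too and
`i` envies `j`. Inside the finite set of strictly improved students this successor relation
closes a cycle.

The two properties of DA used are that it is a matching and non-wasteful: the rejection sets
stabilise within `|I| * |S|` rounds, and once a school rejects someone it keeps receiving at least
its quota of applicants.
-/

def IsClosedWalk {α : Type*} (r : α → α → Prop) (m : ℕ) (c : ℕ → α) : Prop :=
  0 < m ∧ c m = c 0 ∧ ∀ k < m, r (c k) (c (k + 1))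

namespace IsClosedWalk

variable {α : Type*} {r : α → α → Prop} {m : ℕ} {c : ℕ → α}

lemma shift (hc : IsClosedWalk r m c) {a b : ℕ} (hab : a < b) (hbm : b ≤ m) (h : c a = c b) :
    IsClosedWalk r (b - a) (fun k => c (a + k)) :=
  ⟨by omega, by simp [Nat.add_sub_cancel' hab.le, h], fun k hk => hc.2.2 (a + k) (by omega)⟩

lemma exists_injOn (hc : IsClosedWalk r m c) :
    ∃ m' c', IsClosedWalk r m' c' ∧ Set.InjOn c' (Set.Iio m') := by
  classical
  have hex : ∃ m, ∃ c, IsClosedWalk r m c := ⟨m, c, hc⟩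
  obtain ⟨d, hd⟩ := Nat.find_spec hex
  refine ⟨_, d, hd, fun a ha b hb hab => ?_⟩
  by_contra hne
  rcases Nat.lt_or_gt_of_ne hne with h | h
  · exact Nat.find_min hex (by have := Set.mem_Iio.1 hb; omega) ⟨_, hd.shift h hb.le hab⟩
  · exact Nat.find_min hex (by have := Set.mem_Iio.1 ha; omega) ⟨_, hd.shift h ha.le hab.symm⟩

lemma exists_perm_of_injOn (hc : IsClosedWalk r m c) (hinj : Set.InjOn c (Set.Iio m)) :
    ∃ σ : Equiv.Perm α, (∀ x, σ x = x ∨ r x (σ x)) ∧ r (c 0) (σ (c 0)) := by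
  classical
  set l := List.ofFn fun k : Fin m => c k
  have hl : l.Nodup := List.nodup_ofFn.2 fun a b h => Fin.ext (hinj a.2 b.2 h)
  have hσ : ∀ k < m, l.formPerm (c k) = c (k + 1) := by
    intro k hk
    have := List.formPerm_apply_getElem l hl k (by simpa [l] using hk)
    simp only [l, List.getElem_ofFn, List.length_ofFn] at this
    rw [this]
    rcases (Nat.succ_le_of_lt hk).lt_or_eq with h | h
    · rw [Nat.mod_eq_of_lt h]
    · rw [show k + 1 = m from h, Nat.mod_self, hc.2.1]
  refine ⟨l.formPerm, fun x => ?_, hσ 0 hc.1 ▸ hc.2.2 0 hc.1⟩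
  by_cases hx : x ∈ l
  · obtain ⟨⟨k, hk⟩, rfl⟩ := List.mem_ofFn.1 hx
    exact Or.inr (hσ k hk ▸ hc.2.2 k hk)
  · exact Or.inl (List.formPerm_apply_of_notMem hx)

lemma exists_perm (hc : IsClosedWalk r m c) :
    ∃ σ : Equiv.Perm α, (∀ x, σ x = x ∨ r x (σ x)) ∧ ∃ x, r x (σ x) := by
  obtain ⟨m', c', hc', hinj⟩ := hc.exists_injOn
  obtain ⟨σ, hσ, h0⟩ := hc'.exists_perm_of_injOn hinj
  exact ⟨σ, hσ, _, h0⟩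

end IsClosedWalk

lemma exists_isClosedWalk_of_forall_exists_rel {α : Type*} [Finite α] {r : α → α → Prop}
    {s : Set α} (hs : s.Nonempty) (h : ∀ x ∈ s, ∃ y ∈ s, r x y) :
    ∃ m c, IsClosedWalk r m c := by
  choose g hgs hg using h
  let g' : s → s := fun x => ⟨g x x.2, hgs x x.2⟩
  obtain ⟨x₀, hx₀⟩ := hs
  obtain ⟨a, b, hab, heq⟩ := Set.Finite.exists_lt_map_eq_of_forall_mem
    (f := fun n => (g'^[n] ⟨x₀, hx₀⟩ : α)) (fun n => (g'^[n] _).2) s.toFinite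
  refine ⟨b - a, fun k => g'^[a + k] ⟨x₀, hx₀⟩, by omega, ?_, fun k _ => ?_⟩
  · simp only [Nat.add_sub_cancel' hab.le, add_zero]
    exact heq.symm
  · show r (g'^[a + k] _ : α) (g'^[a + k + 1] _ : α)
    rw [Function.iterate_succ_apply']
    exact hg _ _

lemma Finset.le_card_filter_card_filter_lt {α β : Type*} [LinearOrder β] (B : Finset α)
    (f : α → β) {q : ℕ} (hq : q ≤ B.card) :
    q ≤ (B.filter fun j => (B.filter fun j' => f j' < f j).card < q).card := by
  classical
  set K := B.filter fun j => (B.filter fun j' => f j' < f j).card < q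
  by_contra! hK
  obtain ⟨j, hj, hjmin⟩ := exists_min_image (B \ K) f
    (sdiff_nonempty.2 fun hBK => by have := card_le_card hBK; omega)
  obtain ⟨hjB, hjK⟩ := mem_sdiff.1 hj
  have hbelow : (B.filter fun j' => f j' < f j) ⊆ K := fun j' hj' => by
    obtain ⟨hj'B, hlt⟩ := mem_filter.1 hj'
    by_contra hj'K
    exact (hjmin j' (mem_sdiff.2 ⟨hj'B, hj'K⟩)).not_gt hlt
  have := card_le_card hbelow
  exact hjK (mem_filter.2 ⟨hjB, by omega⟩)

namespace SchoolChoice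

open Finset

variable {I S : Type} [Fintype I] [Fintype S] [DecidableEq I] [DecidableEq S]
  (P : SchoolChoice I S)

lemma propose_spec {R : I → Finset S} {i : I} {s : S} (hs : s ∉ R i) :
    P.propose R i ∉ R i ∧ P.rk i (P.propose R i) ≤ P.rk i s := by
  have hne : (univ \ R i).Nonempty := ⟨s, by simpa using hs⟩
  obtain ⟨hmem, hmin⟩ := (exists_min_image (univ \ R i) (P.rk i) hne).choose_spec
  rw [propose, dif_pos hne]
  exact ⟨(mem_sdiff.1 hmem).2, hmin s (by simpa using hs)⟩

lemma not_rejectsAt_nullSchool (R : I → Finset S) (i : I) :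
    ¬ P.rejectsAt R P.nullSchool i := by
  rintro ⟨-, hq⟩
  have hsub : (univ.filter fun j => P.propose R j = P.nullSchool ∧
      P.prio P.nullSchool j < P.prio P.nullSchool i) ⊆ univ.erase i :=
    fun j hj => mem_erase.2 ⟨fun h => by simp [h] at hj, mem_univ j⟩
  have := card_le_card hsub
  rw [card_erase_of_mem (mem_univ i), card_univ, ← P.quota_null] at this
  have := P.quota_pos P.nullSchool
  omega

lemma mem_stepR {R : I → Finset S} {i : I} {s : S} :
    s ∈ P.stepR R i ↔ s ∈ R i ∨ P.rejectsAt R s i := by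
  simp [stepR]

lemma nullSchool_notMem_daR (n : ℕ) (i : I) : P.nullSchool ∉ P.daR n i := by
  induction n with
  | zero => simp [daR]
  | succ n ih => exact fun h => (P.mem_stepR.1 h).elim ih (P.not_rejectsAt_nullSchool _ i)

lemma propose_daR_notMem (n : ℕ) (i : I) : P.propose (P.daR n) i ∉ P.daR n i :=
  (P.propose_spec (P.nullSchool_notMem_daR n i)).1

lemma le_stepR (R : I → Finset S) : R ≤ P.stepR R := fun _ => subset_union_left

lemma daR_mono : Monotone P.daR :=
  monotone_nat_of_le_succ fun n => P.le_stepR (P.daR n)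

lemma daR_eq_of_succ_eq {n : ℕ} (h : P.daR (n + 1) = P.daR n) {m : ℕ} (hm : n ≤ m) :
    P.daR m = P.daR n := by
  induction m, hm using Nat.le_induction with
  | base => rfl
  | succ m _ ih => rw [daR, ih]; exact h

lemma exists_daR_succ_eq :
    ∃ n ≤ Fintype.card I * Fintype.card S, P.daR (n + 1) = P.daR n := by
  by_contra! h
  -- the number of recorded rejections grows in every round but is at most `|I| * |S|`
  have hgrow : ∀ n ≤ Fintype.card I * Fintype.card S + 1, n ≤ ∑ i, (P.daR n i).card := by
    intro n hn
    induction n with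
    | zero => exact Nat.zero_le _
    | succ n ih =>
      have hlt : P.daR n < P.daR (n + 1) :=
        lt_of_le_of_ne (P.daR_mono n.le_succ) (h n (by omega)).symm
      obtain ⟨i, hi⟩ := (Pi.lt_def.1 hlt).2
      have : ∑ i, (P.daR n i).card < ∑ i, (P.daR (n + 1) i).card :=
        sum_lt_sum (fun i _ => card_le_card (hlt.le i)) ⟨i, mem_univ i, card_lt_card hi⟩
      have := ih (by omega)
      omega
  have hbound : ∑ i, (P.daR (Fintype.card I * Fintype.card S + 1) i).card ≤
      Fintype.card I * Fintype.card S :=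
    calc _ ≤ ∑ _i : I, Fintype.card S := sum_le_sum fun i _ => card_le_univ _
      _ = _ := by simp
  have := hgrow _ le_rfl
  omega

lemma daR_succ_eq_of_le {n : ℕ} (hn : Fintype.card I * Fintype.card S ≤ n) :
    P.daR (n + 1) = P.daR n := by
  obtain ⟨m, hm, h⟩ := P.exists_daR_succ_eq
  rw [P.daR_eq_of_succ_eq h (by omega : m ≤ n + 1), P.daR_eq_of_succ_eq h (hm.trans hn)]

lemma not_rejectsAt_daR_of_le {n : ℕ} (hn : Fintype.card I * Fintype.card S ≤ n) (s : S)
    (i : I) : ¬ P.rejectsAt (P.daR n) s i := by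
  intro h
  have hs : s ∈ P.daR (n + 1) i := P.mem_stepR.2 (Or.inr h)
  rw [P.daR_succ_eq_of_le hn, ← h.1] at hs
  exact P.propose_daR_notMem n i hs

lemma isMatching_DA : P.IsMatching P.DA := by
  intro s
  by_contra! hlt
  set A := univ.filter fun i => P.DA i = s
  obtain ⟨i, hiA, hmax⟩ := exists_max_image A (P.prio s) (card_pos.1 (by omega))
  have hsub : A.erase i ⊆ univ.filter fun j => P.DA j = s ∧ P.prio s j < P.prio s i := by
    intro j hj
    obtain ⟨hji, hjA⟩ := mem_erase.1 hj
    exact mem_filter.2 ⟨mem_univ j, (mem_filter.1 hjA).2,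
      lt_of_le_of_ne (hmax j hjA) fun h => hji (P.prio_inj s h)⟩
  refine P.not_rejectsAt_daR_of_le (Nat.le_succ _) s i ⟨(mem_filter.1 hiA).2, ?_⟩
  calc P.quota s ≤ (A.erase i).card := by rw [card_erase_of_mem hiA]; omega
    _ ≤ _ := card_le_card hsub

lemma stepR_apply_of_not_rejectsAt {R : I → Finset S} {i : I}
    (h : ¬ P.rejectsAt R (P.propose R i) i) : P.stepR R i = R i := by
  ext s
  refine P.mem_stepR.trans (or_iff_left_of_imp fun hs => ?_)
  obtain ⟨rfl, -⟩ := id hs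
  exact absurd hs h

lemma quota_le_card_propose_stepR {R : I → Finset S} {s : S}
    (h : P.quota s ≤ (univ.filter fun j => P.propose R j = s).card) :
    P.quota s ≤ (univ.filter fun j => P.propose (P.stepR R) j = s).card := by
  set B := univ.filter fun j => P.propose R j = s
  -- the `quota s` applicants of highest priority are kept, so they apply to `s` again
  refine (B.le_card_filter_card_filter_lt (P.prio s) h).trans (card_le_card fun j hj => ?_)
  obtain ⟨hjB, hj⟩ := mem_filter.1 hj
  have hjs : P.propose R j = s := (mem_filter.1 hjB).2
  have hkept : ¬ P.rejectsAt R (P.propose R j) j := by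
    rintro ⟨-, hq⟩
    rw [hjs] at hq
    rw [filter_filter] at hj
    omega
  refine mem_filter.2 ⟨mem_univ j, ?_⟩
  rw [← hjs]
  simp only [propose, P.stepR_apply_of_not_rejectsAt hkept]

lemma quota_le_card_propose_daR {m n : ℕ} (hmn : m ≤ n) {s : S}
    (h : P.quota s ≤ (univ.filter fun j => P.propose (P.daR m) j = s).card) :
    P.quota s ≤ (univ.filter fun j => P.propose (P.daR n) j = s).card := by
  induction n, hmn using Nat.le_induction with
  | base => exact h
  | succ n _ ih => exact P.quota_le_card_propose_stepR ih

lemma exists_rejectsAt_of_mem_daR {n : ℕ} {i : I} {s : S} (h : s ∈ P.daR n i) :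
    ∃ m < n, P.rejectsAt (P.daR m) s i := by
  induction n with
  | zero => simp [daR] at h
  | succ n ih =>
    rcases P.mem_stepR.1 h with h | h
    · obtain ⟨m, hm, hr⟩ := ih h
      exact ⟨m, by omega, hr⟩
    · exact ⟨n, by omega, h⟩

lemma nonWasteful_DA : P.NonWasteful P.DA := by
  rintro s ⟨i, hi⟩
  have hs : s ∈ P.daR (Fintype.card I * Fintype.card S + 1) i := by
    by_contra hs
    exact (P.propose_spec hs).2.not_gt hi
  obtain ⟨m, hm, hrej⟩ := P.exists_rejectsAt_of_mem_daR hs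
  refine le_antisymm (P.isMatching_DA s) (P.quota_le_card_propose_daR hm.le ?_)
  exact hrej.2.trans (card_le_card (monotone_filter_right _ fun j _ hj => hj.1))

variable {P}

lemma IsMatching.comp_perm {μ : I → S} (hμ : P.IsMatching μ) (σ : Equiv.Perm I) :
    P.IsMatching (μ ∘ σ) :=
  fun s => (card_equiv σ (by simp)).trans_le (hμ s)

lemma paretoDominates_comp_perm {μ : I → S} {σ : Equiv.Perm I}
    (hσ : ∀ i, σ i = i ∨ P.rk i (μ (σ i)) < P.rk i (μ i)) {i₀ : I}
    (hi₀ : P.rk i₀ (μ (σ i₀)) < P.rk i₀ (μ i₀)) : P.ParetoDominates (μ ∘ σ) μ :=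
  ⟨fun i => (hσ i).elim (fun h => by simp [h]) le_of_lt, i₀, hi₀⟩

lemma NonWasteful.exists_improved_occupant {μ ν : I → S} (hμ : P.NonWasteful μ)
    (hν : P.IsMatching ν) (hle : ∀ j, P.rk j (ν j) ≤ P.rk j (μ j)) {i : I}
    (hi : P.rk i (ν i) < P.rk i (μ i)) : ∃ j, P.rk j (ν j) < P.rk j (μ j) ∧ μ j = ν i := by
  have hiμ : μ i ≠ ν i := fun h => (h ▸ hi).false
  have hcard : ((univ.filter fun j => ν j = ν i).erase i).card <
      (univ.filter fun j => μ j = ν i).card := by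
    rw [card_erase_of_mem (by simp), hμ (ν i) ⟨i, hi⟩]
    have := hν (ν i)
    have := P.quota_pos (ν i)
    omega
  obtain ⟨j, hjμ, hjν⟩ := exists_mem_notMem_of_card_lt_card hcard
  have hjμ : μ j = ν i := (mem_filter.1 hjμ).2
  have hνj : ν j ≠ μ j := fun h =>
    hjν (mem_erase.2 ⟨by rintro rfl; exact hiμ hjμ, by simp [h, hjμ]⟩)
  exact ⟨j, lt_of_le_of_ne (hle j) fun h => hνj (P.rk_inj j h), hjμ⟩

end SchoolChoice

/-- The matching `DA(P)` is Pareto-efficient if and only if the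
envy digraph `G^DA(P)` contains no directed cycle. -/
theorem da_paretoEfficient_iff_acyclic {I S : Type} [Fintype I] [Fintype S]
    [DecidableEq I] [DecidableEq S] (P : SchoolChoice I S) :
    P.ParetoEfficient P.DA ↔ ¬ ∃ i : I, P.OnCycle i := by
  constructor
  · rintro ⟨hDA, hopt⟩ ⟨i, m, c, hm, hc0, hcm, hc⟩
    obtain ⟨σ, hσ, i₀, hi₀⟩ :=
      IsClosedWalk.exists_perm (r := P.Envy) ⟨hm, hcm.trans hc0.symm, hc⟩
    exact hopt _ (hDA.comp_perm σ) (SchoolChoice.paretoDominates_comp_perm hσ hi₀)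
  · intro hacyclic
    refine ⟨P.isMatching_DA, fun ν hν hdom => hacyclic ?_⟩
    obtain ⟨m, c, hm, hcm, hc⟩ := exists_isClosedWalk_of_forall_exists_rel (r := P.Envy)
      (s := {i | P.rk i (ν i) < P.rk i (P.DA i)}) hdom.2 fun i hi => by
        obtain ⟨j, hj, hji⟩ := P.nonWasteful_DA.exists_improved_occupant hν hdom.1 hi
        exact ⟨j, hj, show P.rk i (P.DA j) < _ by rwa [hji]⟩
    exact ⟨c 0, m, c, hm, rfl, hcm, hc⟩
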